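/- Any basis produced by the symplectic greedy procedure is X-orthonormal: if Ã_{2k} = [e_1|…|e_k|Te_1|…|Te_k] is J-symplectic with J = X^{1/2}𝕁_{2n}X^{1/2} and T = X^{-1/2}𝕁_{2n}ᵀX^{1/2}, and each ‖e_i‖_X = 1, then Ã_{2k}ᵀ X Ã_{2k} = I_{2k}. -/

import Mathlib

/-!
With `J = Xs 𝕁 Xs` and `T = Xs⁻¹ 𝕁ᵀ Xs` one has `J T = X` and `X T = -J`. Hence for
`Ã = [E | T E]` the columns of `X Ã = [X E | -J E]` are those of `J Ã` rearranged, i.e.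
`X Ã = J Ã 𝕁ᵀ`, and therefore `Ãᵀ X Ã = (Ãᵀ J Ã) 𝕁ᵀ = 𝕁 𝕁ᵀ = I`.
-/

open Matrix

noncomputable section

def Js (k : ℕ) : Matrix (Fin k ⊕ Fin k) (Fin k ⊕ Fin k) ℝ :=
  Matrix.fromBlocks 0 1 (-1) 0

lemma Js_transpose (k : ℕ) : (Js k)ᵀ = -Js k := by
  simp [Js, fromBlocks_transpose, fromBlocks_neg]

lemma Js_mul_transpose (k : ℕ) : Js k * (Js k)ᵀ = 1 := by
  simp [Js, fromBlocks_transpose, fromBlocks_multiply, ← fromBlocks_one]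

lemma fromCols_mul_Js_transpose {m : Type*} {k : ℕ} (E F : Matrix m (Fin k) ℝ) :
    fromCols E F * (Js k)ᵀ = fromCols F (-E) := by
  simp [Js, fromBlocks_transpose, fromCols_mul_fromBlocks]

section Conjugation

variable {R ι : Type*} [CommRing R] [Fintype ι] [DecidableEq ι] {S Ω : Matrix ι ι R}

lemma conj_mul_conj_inv_transpose (hS : IsUnit S.det) (hΩ : Ω * Ωᵀ = 1) :
    (S * Ω * S) * (S⁻¹ * Ωᵀ * S) = S * S := by
  calc (S * Ω * S) * (S⁻¹ * Ωᵀ * S)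
      = S * Ω * (S * S⁻¹) * Ωᵀ * S := by simp only [Matrix.mul_assoc]
    _ = S * S := by
      rw [mul_nonsing_inv _ hS, Matrix.mul_one, Matrix.mul_assoc S, hΩ, Matrix.mul_one]

lemma sq_mul_conj_inv_transpose (hS : IsUnit S.det) (hΩ : Ωᵀ = -Ω) :
    (S * S) * (S⁻¹ * Ωᵀ * S) = -(S * Ω * S) := by
  calc (S * S) * (S⁻¹ * Ωᵀ * S)
      = S * (S * S⁻¹) * Ωᵀ * S := by simp only [Matrix.mul_assoc]
    _ = -(S * Ω * S) := by
      rw [mul_nonsing_inv _ hS, Matrix.mul_one, hΩ, Matrix.mul_neg, Matrix.neg_mul]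

end Conjugation

section Symplectic

variable {m : Type*} [Fintype m] {k : ℕ} {X J T : Matrix m m ℝ}

lemma mul_fromCols_mul_self_eq (hJT : J * T = X) (hXT : X * T = -J) (E : Matrix m (Fin k) ℝ) :
    X * fromCols E (T * E) = J * fromCols E (T * E) * (Js k)ᵀ := by
  rw [Matrix.mul_assoc, fromCols_mul_Js_transpose, mul_fromCols, mul_fromCols,
    ← Matrix.mul_assoc, ← Matrix.mul_assoc, hJT, hXT, Matrix.mul_neg, Matrix.neg_mul]

lemma transpose_mul_mul_eq_one_of_symplectic {A : Matrix m (Fin k ⊕ Fin k) ℝ}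
    (hsymp : Aᵀ * J * A = Js k) (hXA : X * A = J * A * (Js k)ᵀ) :
    Aᵀ * X * A = 1 := by
  rw [Matrix.mul_assoc, hXA, ← Matrix.mul_assoc, ← Matrix.mul_assoc, hsymp, Js_mul_transpose]

end Symplectic

theorem greedy_symplectic_basis_X_orthonormal_general (n k : ℕ)
    (X Xs : Matrix (Fin n ⊕ Fin n) (Fin n ⊕ Fin n) ℝ)
    (hXs : Xs * Xs = X) (hXsp : Xs.PosDef)
    (e : Fin k → (Fin n ⊕ Fin n) → ℝ)
    (Atilde : Matrix (Fin n ⊕ Fin n) (Fin k ⊕ Fin k) ℝ)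
    (hcols : ∀ r j, Atilde r j =
      Sum.elim (fun i => e i r) (fun i => ((Xs⁻¹ * (Js n)ᵀ * Xs) *ᵥ e i) r) j)
    (hsymp : Atildeᵀ * (Xs * Js n * Xs) * Atilde = Js k) :
    Atildeᵀ * X * Atilde = 1 := by
  set T := Xs⁻¹ * (Js n)ᵀ * Xs
  set E : Matrix (Fin n ⊕ Fin n) (Fin k) ℝ := of fun r i => e i r
  have hdet : IsUnit Xs.det := (isUnit_iff_isUnit_det Xs).mp hXsp.isUnit
  have hA : Atilde = fromCols E (T * E) := by
    ext r (i | i) <;> simp [hcols, E, mulVec, dotProduct, mul_apply]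
  refine transpose_mul_mul_eq_one_of_symplectic hsymp ?_
  rw [hA]
  refine mul_fromCols_mul_self_eq ?_ ?_ E
  · rw [conj_mul_conj_inv_transpose hdet (Js_mul_transpose n), hXs]
  · rw [← hXs, sq_mul_conj_inv_transpose hdet (Js_transpose n)]

/-- Any basis produced by the symplectic greedy procedure is `X`-orthonormal:
if `Ã = [e_1|…|e_k|Te_1|…|Te_k]` is `J`-symplectic with `J = Xs 𝕁 Xs` and
`T = Xs⁻¹ 𝕁ᵀ Xs`, and each `‖e_i‖_X = 1`, then `Ãᵀ X Ã = I`. -/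
theorem greedy_symplectic_basis_X_orthonormal (n k : ℕ)
    (X Xs : Matrix (Fin n ⊕ Fin n) (Fin n ⊕ Fin n) ℝ)
    (hX : X.PosDef) (hXs_sym : Xsᵀ = Xs) (hXs : Xs * Xs = X) (hXsp : Xs.PosDef)
    (e : Fin k → (Fin n ⊕ Fin n) → ℝ)
    (Atilde : Matrix (Fin n ⊕ Fin n) (Fin k ⊕ Fin k) ℝ)
    (hcols : ∀ r j, Atilde r j =
      Sum.elim (fun i => e i r) (fun i => ((Xs⁻¹ * (Js n)ᵀ * Xs) *ᵥ e i) r) j)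
    (hsymp : Atildeᵀ * (Xs * Js n * Xs) * Atilde = Js k)
    (hnorm : ∀ i, e i ⬝ᵥ (X *ᵥ e i) = 1) :
    Atildeᵀ * X * Atilde = 1 :=
  greedy_symplectic_basis_X_orthonormal_general n k X Xs hXs hXsp e Atilde hcols hsymp
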